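/- Let k ≥ 1 and let (U,σ) be a structure over (Σ,𝔇) with tw(σ) ≤ k witnessed by a reduced tree decomposition T = (N,F,r,λ) of width k with λ(r) = {v_1,…,v_{k+1}}, such that σ(𝔇) = (⋃_{n ∈ N} λ(n)) ∖ {v_1,…,v_{k+1}}. Let ν be a store with ν(x_i) = v_i for all i ∈ [1,k+1]. Then (U,σ) ⊨ν_{Δ_tw^k} A(x_1,…,x_{k+1}). -/

import Mathlib

set_option maxHeartbeats 800000

/-- A finite relational signature with constant symbols. -/
structure Signature where
  Rel : Type
  arity : Rel → ℕ
  Const : Type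
  finRel : Finite Rel
  finConst : Finite Const

/-- An interpretation of the signature `Sg` in the universe `U`: each relation
symbol is mapped to a finite set of tuples and each constant to an element. -/
structure Interp (Sg : Signature) (U : Type) where
  rel : (R : Sg.Rel) → Set (Fin (Sg.arity R) → U)
  rel_finite : ∀ R, (rel R).Finite
  const : Sg.Const → U

/-- A structure over `(Σ,𝔇)`: an interpretation of `Σ` together with the
interpretation of the distinguished unary relation symbol `𝔇`. -/
structure InterpD (Sg : Signature) (U : Type) extends Interp Sg U where
  D : Set U
  D_finite : D.Finite

/-- The set `Rel(σ)` of elements occurring in some tuple of some relation. -/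
def RelSet {Sg : Signature} {U : Type} (σ : Interp Sg U) : Set U :=
  {u | ∃ (R : Sg.Rel) (g : Fin (Sg.arity R) → U), g ∈ σ.rel R ∧ ∃ i, g i = u}

/-- The domain `Dom(σ)`: elements occurring in relations or denoted by constants. -/
def Interp.domSet {Sg : Signature} {U : Type} (σ : Interp Sg U) : Set U :=
  RelSet σ ∪ Set.range σ.const

/-- A structure is guarded iff every element occurring in a relation tuple
belongs to `σ(𝔇)`. -/
def InterpD.Guarded {Sg : Signature} {U : Type} (σ : InterpD Sg U) : Prop :=
  RelSet σ.toInterp ⊆ σ.D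

/-- A finite rooted tree, given by a parent function. -/
structure RTree where
  N : Type
  finN : Finite N
  root : N
  parent : N → N
  parent_root : parent root = root
  reach : ∀ n, ∃ m : ℕ, parent^[m] n = root

/-- `m` is a child of `n`. -/
def RTree.IsChild (T : RTree) (m n : T.N) : Prop := T.parent m = n ∧ m ≠ n

/-- A leaf is a node with no children. -/
def RTree.IsLeaf (T : RTree) (n : T.N) : Prop := ∀ m, ¬ T.IsChild m n

/-- `n` is a descendant of `m` (belongs to the subtree rooted at `m`). -/
def RTree.Desc (T : RTree) (n m : T.N) : Prop := ∃ j : ℕ, T.parent^[j] n = m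

/-- The set `S` of nodes induces a connected subtree. -/
def RTree.ConnSubtree (T : RTree) (S : Set T.N) : Prop :=
  S.Nonempty → ∃ t ∈ S, ∀ n ∈ S, ∃ m : ℕ,
    T.parent^[m] n = t ∧ ∀ j ≤ m, T.parent^[j] n ∈ S

/-- A tree decomposition of the structure given by the interpretation `σ`
(and, in the `(Σ,𝔇)` case, the interpretation `D` of the unary symbol `𝔇`;
for structures over a plain signature take `D = ∅`). -/
structure TreeDecomp {Sg : Signature} {U : Type} (σ : Interp Sg U) (D : Set U) where
  tree : RTree
  bag : tree.N → Finset U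
  covers : ∀ (R : Sg.Rel) (g : Fin (Sg.arity R) → U), g ∈ σ.rel R → ∃ n, ∀ i, g i ∈ bag n
  coversD : ∀ u ∈ D, ∃ n, u ∈ bag n
  conn : ∀ u : U, tree.ConnSubtree {n | u ∈ bag n}

/-- The width of a tree decomposition: `max_n |λ(n)| - 1`. -/
noncomputable def TreeDecomp.width {Sg : Signature} {U : Type} {σ : Interp Sg U} {D : Set U}
    (T : TreeDecomp σ D) : ℕ :=
  (⨆ n, (T.bag n).card) - 1

/-- A leaf `n` witnesses the tuple `t.2 ∈ σ(t.1)` iff its bag contains all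
elements of the tuple. -/
def TreeDecomp.Witnesses {Sg : Signature} {U : Type} {σ : Interp Sg U} {D : Set U}
    (T : TreeDecomp σ D) (n : T.tree.N) (t : (R : Sg.Rel) × (Fin (Sg.arity R) → U)) : Prop :=
  t.2 ∈ σ.rel t.1 ∧ ∀ i, t.2 i ∈ T.bag n

/-- A tree decomposition of width `k` is reduced (Def. of reduced tree decompositions). -/
def TreeDecomp.IsReduced {Sg : Signature} {U : Type} {σ : Interp Sg U} {D : Set U}
    (k : ℕ) (T : TreeDecomp σ D) : Prop :=
  -- (1) every tuple has a witnessing leaf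
  (∀ (R : Sg.Rel) (g : Fin (Sg.arity R) → U), g ∈ σ.rel R →
      ∃ n, T.tree.IsLeaf n ∧ T.Witnesses n ⟨R, g⟩) ∧
  -- (2) each leaf witnesses exactly one tuple
  (∀ n, T.tree.IsLeaf n → ∃! t : (R : Sg.Rel) × (Fin (Sg.arity R) → U), T.Witnesses n t) ∧
  -- (3) each node has at most two children
  (∀ n m₁ m₂ m₃ : T.tree.N, T.tree.IsChild m₁ n → T.tree.IsChild m₂ n → T.tree.IsChild m₃ n →
      m₁ = m₂ ∨ m₁ = m₃ ∨ m₂ = m₃) ∧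
  -- (4) the two children of a binary node carry the same bag as their parent
  (∀ n m₁ m₂ : T.tree.N, T.tree.IsChild m₁ n → T.tree.IsChild m₂ n → m₁ ≠ m₂ →
      T.bag n = T.bag m₁ ∧ T.bag n = T.bag m₂) ∧
  -- (5) all bags have exactly k+1 elements
  (∀ n, (T.bag n).card = k + 1) ∧
  -- (6) a unary node agrees with its child, or they differ by exactly one element each way
  (∀ n m : T.tree.N, T.tree.IsChild m n → (∀ m', T.tree.IsChild m' n → m' = m) →
      T.bag n = T.bag m ∨
        (((T.bag n : Set U) \ (T.bag m : Set U)).ncard = 1 ∧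
         ((T.bag m : Set U) \ (T.bag n : Set U)).ncard = 1))

/-- Tree decompositions of a structure over `(Σ,𝔇)`. -/
abbrev TreeDecompD {Sg : Signature} {U : Type} (σ : InterpD Sg U) :=
  TreeDecomp σ.toInterp σ.D
/-- Formulas of the separation logic of relations `SLR` over the signature
`(Σ,𝔇)`, with predicate symbols from `P` (of arities `ar`); first-order
variables are natural numbers. -/
inductive SLRForm (Sg : Signature) (P : Type) (ar : P → ℕ) : Type
  | rel (R : Sg.Rel) (args : Fin (Sg.arity R) → ℕ)
  | datom (y : ℕ)
  | pred (p : P) (args : Fin (ar p) → ℕ)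
  | star (φ ψ : SLRForm Sg P ar)
  | ex (y : ℕ) (φ : SLRForm Sg P ar)

/-- A set of inductive definitions (SID): a set of rules `p(x_0,…,x_{ar p - 1}) ← ρ`
for each predicate symbol `p`; the body `ρ` uses the variables `0,…,ar p - 1` as
formal parameters. -/
structure SID (Sg : Signature) where
  P : Type
  ar : P → ℕ
  rules : (p : P) → Set (SLRForm Sg P ar)

/-- An SID is finite: finitely many predicates and finitely many rules. -/
def SID.IsFinite {Sg : Signature} (Δ : SID Sg) : Prop :=
  Finite Δ.P ∧ ∀ p, (Δ.rules p).Finite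

/-- `σ` is the composition `σ₁ • σ₂` of two structures with the same universe and
agreeing constant interpretations: all relations (including `𝔇`) are disjoint
and interpreted by unions. -/
def IsUnionD {Sg : Signature} {U : Type} (σ σ₁ σ₂ : InterpD Sg U) : Prop :=
  σ₁.const = σ₂.const ∧ σ.const = σ₁.const ∧
  (∀ R, σ₁.rel R ∩ σ₂.rel R = ∅ ∧ σ.rel R = σ₁.rel R ∪ σ₂.rel R) ∧
  σ₁.D ∩ σ₂.D = ∅ ∧ σ.D = σ₁.D ∪ σ₂.D

/-- The satisfaction relation `(U,σ) ⊨ν_Δ φ` of SLR. -/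
inductive SLRSat {Sg : Signature} {U : Type} (Δ : SID Sg) :
    InterpD Sg U → (ℕ → U) → SLRForm Sg Δ.P Δ.ar → Prop where
  | rel {σ : InterpD Sg U} {ν : ℕ → U} {R : Sg.Rel} {args : Fin (Sg.arity R) → ℕ}
      (h1 : σ.rel R = {fun i => ν (args i)})
      (h2 : ∀ R', R' ≠ R → σ.rel R' = ∅)
      (h3 : σ.D = ∅) :
      SLRSat Δ σ ν (.rel R args)
  | datom {σ : InterpD Sg U} {ν : ℕ → U} {y : ℕ}
      (h1 : σ.D = {ν y}) (h2 : ∀ R, σ.rel R = ∅) :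
      SLRSat Δ σ ν (.datom y)
  | star {σ σ₁ σ₂ : InterpD Sg U} {ν : ℕ → U} {φ ψ : SLRForm Sg Δ.P Δ.ar}
      (h : IsUnionD σ σ₁ σ₂) (hφ : SLRSat Δ σ₁ ν φ) (hψ : SLRSat Δ σ₂ ν ψ) :
      SLRSat Δ σ ν (.star φ ψ)
  | ex {σ : InterpD Sg U} {ν : ℕ → U} {y : ℕ} {φ : SLRForm Sg Δ.P Δ.ar} (v : U)
      (h : SLRSat Δ σ (Function.update ν y v) φ) :
      SLRSat Δ σ ν (.ex y φ)
  | pred {σ : InterpD Sg U} {ν : ℕ → U} {p : Δ.P} {args : Fin (Δ.ar p) → ℕ}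
      {ρ : SLRForm Sg Δ.P Δ.ar} (ν' : ℕ → U)
      (hρ : ρ ∈ Δ.rules p) (hν : ∀ i : Fin (Δ.ar p), ν' i.1 = ν (args i))
      (h : SLRSat Δ σ ν' ρ) :
      SLRSat Δ σ ν (.pred p args)

/-- The SID `Δ_tw^k` defining the guarded structures of treewidth at most `k`.
The predicate `A` of arity `k+1` is encoded by `true`, the nullary predicate
`A_k` by `false`; parameters `x_1,…,x_{k+1}` are the variables `0,…,k`. -/
def twSID (Sg : Signature) (k : ℕ) : SID Sg where
  P := Bool
  ar := fun b => cond b (k+1) 0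
  rules := fun b =>
    if b then
      -- (1)  A(x₁,…,x_{k+1}) ← A(x₁,…,x_{k+1}) * A(x₁,…,x_{k+1})
      {SLRForm.star (.pred true fun i => i.1) (.pred true fun i => i.1)} ∪
      -- (2)  A(x₁,…,x_{k+1}) ← ∃y. 𝔇(y) * A(x₁,…,x_{k+1})[xᵢ/y]
      (⋃ i : Fin (k+1),
        {SLRForm.ex (k+1) (.star (.datom (k+1))
          (.pred true (fun j : Fin (k+1) => if j = i then (k+1 : ℕ) else j.1)))}) ∪
      -- (3)  A(x₁,…,x_{k+1}) ← R(y₁,…,y_{#R}),  y's among x₁,…,x_{k+1}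
      {ρ | ∃ (R : Sg.Rel) (f : Fin (Sg.arity R) → Fin (k+1)),
          ρ = SLRForm.rel R (fun a => (f a).1)}
    else
      -- (4)  A_k() ← ∃x₁…∃x_{k+1}. 𝔇(x₁) * … * 𝔇(x_{k+1}) * A(x₁,…,x_{k+1})
      {(List.range (k+1)).foldr (fun i acc => SLRForm.ex i acc)
        ((List.range (k+1)).foldr (fun i acc => SLRForm.star (.datom i) acc)
          (SLRForm.pred true (fun i => i.1)))}
/-- The signature `Σ ∪ Π` obtained by adding `k` fresh constants (ports). -/
abbrev Signature.addConsts (Sg : Signature) (k : ℕ) : Signature where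
  Rel := Sg.Rel
  arity := Sg.arity
  Const := Sg.Const ⊕ Fin k
  finRel := Sg.finRel
  finConst := by haveI := Sg.finConst; exact inferInstance

/-- The signature `(Σ,𝔇)` seen as an ordinary signature: `𝔇` (encoded as `none`)
is a fresh unary relation symbol. -/
abbrev Signature.addD (Sg : Signature) : Signature where
  Rel := Option Sg.Rel
  arity := fun R => R.elim 1 Sg.arity
  Const := Sg.Const
  finRel := by
    haveI := Sg.finRel
    exact Finite.of_equiv (Sg.Rel ⊕ PUnit.{1}) (Equiv.optionEquivSumPUnit.{0,0} Sg.Rel).symm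
  finConst := Sg.finConst

/-- View a structure over `(Σ,𝔇)` as an ordinary structure over `Σ ∪ {𝔇}`. -/
def InterpD.toFull {Sg : Signature} {U : Type} (σ : InterpD Sg U) : Interp Sg.addD U where
  rel := fun R =>
    match R with
    | none => (fun (u : U) (_ : Fin 1) => u) '' σ.D
    | some r => σ.rel r
  rel_finite := fun R => by
    match R with
    | none => exact σ.D_finite.image _
    | some r => exact σ.rel_finite r
  const := σ.const
/-- Monadic second-order formulas over the signature `Sg`: first-order terms are
variables (naturals) or constants, set variables are naturals. -/
inductive MSO (Sg : Signature) : Type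
  | rel (R : Sg.Rel) (args : Fin (Sg.arity R) → ℕ ⊕ Sg.Const)
  | eq (t₁ t₂ : ℕ ⊕ Sg.Const)
  | mem (t : ℕ ⊕ Sg.Const) (X : ℕ)
  | not (φ : MSO Sg)
  | and (φ ψ : MSO Sg)
  | exFO (y : ℕ) (φ : MSO Sg)
  | exSO (Y : ℕ) (φ : MSO Sg)

/-- The quantifier rank of an MSO formula. -/
def MSO.qr {Sg : Signature} : MSO Sg → ℕ
  | .rel _ _ => 0
  | .eq _ _ => 0
  | .mem _ _ => 0
  | .not φ => φ.qr
  | .and φ ψ => max φ.qr ψ.qr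
  | .exFO _ φ => φ.qr + 1
  | .exSO _ φ => φ.qr + 1

/-- Free first-order variables. -/
def MSO.fvFO {Sg : Signature} : MSO Sg → Set ℕ
  | .rel _ args => {n | ∃ i, args i = Sum.inl n}
  | .eq t₁ t₂ => {n | t₁ = Sum.inl n ∨ t₂ = Sum.inl n}
  | .mem t _ => {n | t = Sum.inl n}
  | .not φ => φ.fvFO
  | .and φ ψ => φ.fvFO ∪ ψ.fvFO
  | .exFO y φ => φ.fvFO \ {y}
  | .exSO _ φ => φ.fvFO

/-- Free set variables. -/
def MSO.fvSO {Sg : Signature} : MSO Sg → Set ℕ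
  | .rel _ _ => ∅
  | .eq _ _ => ∅
  | .mem _ X => {X}
  | .not φ => φ.fvSO
  | .and φ ψ => φ.fvSO ∪ ψ.fvSO
  | .exFO _ φ => φ.fvSO
  | .exSO Y φ => φ.fvSO \ {Y}

/-- A sentence is a closed formula. -/
def MSO.IsSentence {Sg : Signature} (φ : MSO Sg) : Prop := φ.fvFO = ∅ ∧ φ.fvSO = ∅

/-- Value of a term under a first-order assignment. -/
def termVal {Sg : Signature} {U : Type} (σ : Interp Sg U) (ν : ℕ → U) : ℕ ⊕ Sg.Const → U :=
  Sum.elim ν σ.const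

/-- MSO satisfaction, under a first-order assignment `ν` and set assignment `μ`. -/
def MSOSat {Sg : Signature} {U : Type} (σ : Interp Sg U) :
    (ℕ → U) → (ℕ → Set U) → MSO Sg → Prop
  | ν, _, .rel R args => (fun i => termVal σ ν (args i)) ∈ σ.rel R
  | ν, _, .eq t₁ t₂ => termVal σ ν t₁ = termVal σ ν t₂
  | ν, μ, .mem t X => termVal σ ν t ∈ μ X
  | ν, μ, .not φ => ¬ MSOSat σ ν μ φ
  | ν, μ, .and φ ψ => MSOSat σ ν μ φ ∧ MSOSat σ ν μ ψ
  | ν, μ, .exFO y φ => ∃ v : U, MSOSat σ (Function.update ν y v) μ φ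
  | ν, μ, .exSO Y φ => ∃ V : Set U, MSOSat σ ν (Function.update μ Y V) φ

/-- A structure satisfies a sentence (notation `S ⊩ φ`). -/
def Interp.Models {Sg : Signature} {U : Type} (σ : Interp Sg U) (φ : MSO Sg) : Prop :=
  ∀ (ν : ℕ → U) (μ : ℕ → Set U), MSOSat σ ν μ φ

/-- The `r`-type of a structure: the set of sentences of quantifier rank at most
`r` that it satisfies. -/
def Interp.typeAt {Sg : Signature} {U : Type} (σ : Interp Sg U) (r : ℕ) : Set (MSO Sg) :=
  {φ | φ.IsSentence ∧ φ.qr ≤ r ∧ σ.Models φ}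

/-- The `r`-type of a structure over `(Σ,𝔇)`: sentences over `Σ ∪ {𝔇}`. -/
def InterpD.typeAt {Sg : Signature} {U : Type} (σ : InterpD Sg U) (r : ℕ) :
    Set (MSO Sg.addD) :=
  σ.toFull.typeAt r

/-- A structure over `(Σ,𝔇)` , bundled with its universe. -/
structure StrucD (Sg : Signature) where
  carrier : Type
  interp : InterpD Sg carrier

/-- The `r`-type of a bundled structure. -/
def StrucD.typeAt {Sg : Signature} (S : StrucD Sg) (r : ℕ) : Set (MSO Sg.addD) :=
  S.interp.typeAt r

/-- Isomorphism of structures over `(Σ,𝔇)`. -/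
structure IsoD {Sg : Signature} (S T : StrucD Sg) where
  equiv : S.carrier ≃ T.carrier
  map_rel : ∀ (R : Sg.Rel) (g : Fin (Sg.arity R) → S.carrier),
      g ∈ S.interp.rel R ↔ (fun i => equiv (g i)) ∈ T.interp.rel R
  map_const : ∀ c, equiv (S.interp.const c) = T.interp.const c
  map_D : ∀ u, u ∈ S.interp.D ↔ equiv u ∈ T.interp.D

/-- The identifications performed by glueing: `σ₁(c) ∼ σ₂(c)` for every shared
constant `c` (here both structures are over the same signature, so all constants
are shared). -/
def glueRel {Sg : Signature} (S₁ S₂ : StrucD Sg) :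
    (S₁.carrier ⊕ S₂.carrier) → (S₁.carrier ⊕ S₂.carrier) → Prop :=
  fun a b => ∃ c : Sg.Const, a = Sum.inl (S₁.interp.const c) ∧ b = Sum.inr (S₂.interp.const c)

/-- Glueing of two structures (with disjoint universes, realized by the sum type):
the quotient of the disjoint union identifying the elements denoted by shared constants. -/
def glueD {Sg : Signature} (S₁ S₂ : StrucD Sg) : StrucD Sg where
  carrier := Quot (glueRel S₁ S₂)
  interp :=
  { rel := fun R =>
      ((fun g (i : Fin (Sg.arity R)) => Quot.mk (glueRel S₁ S₂) (Sum.inl (g i))) '' S₁.interp.rel R) ∪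
      ((fun g (i : Fin (Sg.arity R)) => Quot.mk (glueRel S₁ S₂) (Sum.inr (g i))) '' S₂.interp.rel R)
    rel_finite := fun R =>
      ((S₁.interp.rel_finite R).image _).union ((S₂.interp.rel_finite R).image _)
    const := fun c => Quot.mk (glueRel S₁ S₂) (Sum.inl (S₁.interp.const c))
    D := ((fun u => Quot.mk (glueRel S₁ S₂) (Sum.inl u)) '' S₁.interp.D) ∪
         ((fun u => Quot.mk (glueRel S₁ S₂) (Sum.inr u)) '' S₂.interp.D)
    D_finite := (S₁.interp.D_finite.image _).union (S₂.interp.D_finite.image _) }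

/-- The encoding `enc_k((U,σ),ν)` of the store values into the structure:
port constant `c_{M+i}` (for `i < k`) denotes `ν(i)`, and the store values are
added to `𝔇`. -/
def encD {Sg : Signature} {U : Type} (k : ℕ) (σ : InterpD Sg U) (ν : ℕ → U) :
    InterpD (Sg.addConsts k) U where
  rel := σ.rel
  rel_finite := σ.rel_finite
  const := Sum.elim σ.const (fun i : Fin k => ν i)
  D := σ.D ∪ ν '' Set.Iio k
  D_finite := σ.D_finite.union ((Set.finite_Iio k).image ν)

/-- Pointwise union of two interpretations over the same universe
(the composition `•`, when the disjointness conditions hold). -/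
def InterpD.union {Sg : Signature} {U : Type} (σ₁ σ₂ : InterpD Sg U) : InterpD Sg U where
  rel := fun R => σ₁.rel R ∪ σ₂.rel R
  rel_finite := fun R => (σ₁.rel_finite R).union (σ₂.rel_finite R)
  const := σ₁.const
  D := σ₁.D ∪ σ₂.D
  D_finite := σ₁.D_finite.union σ₂.D_finite
/-- The operation `glue(fgt_{M+i}(S), S')` where `S'` is a structure over
`({c_{M+i}},𝔇)` with a singleton universe satisfying `𝔇(c_{M+i})`: the port
constant `c_{M+i}` is re-pointed to a fresh element, which is added to `𝔇`. -/
def refreshC {Sg : Signature} {k : ℕ} (i : Fin (k+1)) (S : StrucD (Sg.addConsts (k+1))) :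
    StrucD (Sg.addConsts (k+1)) where
  carrier := S.carrier ⊕ Unit
  interp :=
  { rel := fun R => (fun g (a : Fin (Sg.arity R)) => Sum.inl (g a)) '' S.interp.rel R
    rel_finite := fun R => (S.interp.rel_finite R).image _
    const := fun c =>
      match c with
      | Sum.inl a => Sum.inl (S.interp.const (Sum.inl a))
      | Sum.inr j => if j = i then Sum.inr () else Sum.inl (S.interp.const (Sum.inr j))
    D := (Sum.inl '' S.interp.D) ∪ {Sum.inr ()}
    D_finite := (S.interp.D_finite.image _).union (Set.finite_singleton _) }

/-- An MSO sentence over `(Σ,𝔇)` is also a sentence over `(Σ ∪ Π,𝔇)`. -/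
def MSO.addPorts {Sg : Signature} (k : ℕ) : MSO Sg.addD → MSO (Sg.addConsts k).addD
  | .rel R args => .rel R (fun j => (args j).map id Sum.inl)
  | .eq t₁ t₂ => .eq (t₁.map id Sum.inl) (t₂.map id Sum.inl)
  | .mem t X => .mem (t.map id Sum.inl) X
  | .not φ => .not (φ.addPorts k)
  | .and φ ψ => .and (φ.addPorts k) (ψ.addPorts k)
  | .exFO y φ => .exFO y (φ.addPorts k)
  | .exSO Y φ => .exSO Y (φ.addPorts k)

/-- The SID `Δ_{k,φ}`: the annotation of `Δ_tw^k` with `qr(φ)`-types. The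
predicate `A^τ` (arity `k+1`) is encoded by `Sum.inl τ`; the nullary predicate
`A_{k,φ}` by `Sum.inr ()`. The abstract operations `⊛` and `fgt♯` are expressed
via their defining property: `τ₁ ⊛ τ₂` is the type of the glueing of (any) two
structures of types `τ₁` and `τ₂`, and `fgt♯_{M+i}(τ₁) ⊛ ρ_i` is the type of
`refreshC i S` for (any) `S` of type `τ₁`. -/
def twFormSID (Sg : Signature) (k : ℕ) (φ : MSO Sg.addD) : SID Sg where
  P := Set (MSO ((Sg.addConsts (k+1)).addD)) ⊕ Unit
  ar := fun p => Sum.elim (fun _ => k+1) (fun _ => 0) p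
  rules := fun p =>
    match p with
    | Sum.inl τ =>
      -- (5)  A^τ ← A^{τ₁} * A^{τ₂}  where τ = τ₁ ⊛ τ₂
      {ρ | ∃ τ₁ τ₂ : Set (MSO ((Sg.addConsts (k+1)).addD)),
          ρ = SLRForm.star (.pred (Sum.inl τ₁) fun a => a.1) (.pred (Sum.inl τ₂) fun a => a.1) ∧
          ∃ S₁ S₂ : StrucD (Sg.addConsts (k+1)),
            S₁.typeAt φ.qr = τ₁ ∧ S₂.typeAt φ.qr = τ₂ ∧ (glueD S₁ S₂).typeAt φ.qr = τ} ∪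
      -- (6)  A^τ ← ∃y. 𝔇(y) * A^{τ₁}(x₁,…,x_{k+1})[xᵢ/y]
      --      where τ = fgt♯_{M+i}(τ₁) ⊛ ρᵢ
      {ρ | ∃ (i : Fin (k+1)) (τ₁ : Set (MSO ((Sg.addConsts (k+1)).addD))),
          ρ = SLRForm.ex (k+1) (.star (.datom (k+1))
            (.pred (Sum.inl τ₁) (fun j : Fin (k+1) => if j = i then (k+1 : ℕ) else j.1))) ∧
          ∃ S : StrucD (Sg.addConsts (k+1)),
            S.typeAt φ.qr = τ₁ ∧ (refreshC i S).typeAt φ.qr = τ} ∪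
      -- (7)  A^τ ← R(y₁,…,y_{#R})  where τ is the type of a structure S with
      --      S ⊩ R(y₁,…,y_{#R})[x₁/c_{M+1},…] * ⋆ⱼ 𝔇(c_{M+j})
      {ρ | ∃ (R : Sg.Rel) (f : Fin (Sg.arity R) → Fin (k+1)),
          ρ = SLRForm.rel R (fun a => (f a).1) ∧
          ∃ S : StrucD (Sg.addConsts (k+1)),
            S.interp.rel R = {fun a => S.interp.const (Sum.inr (f a))} ∧
            (∀ R', R' ≠ R → S.interp.rel R' = ∅) ∧
            S.interp.D = Set.range (fun j : Fin (k+1) => S.interp.const (Sum.inr j)) ∧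
            Function.Injective (fun j : Fin (k+1) => S.interp.const (Sum.inr j)) ∧
            S.typeAt φ.qr = τ}
    | Sum.inr _ =>
      -- (8)  A_{k,φ}() ← ∃x₁…∃x_{k+1}. 𝔇(x₁) * … * 𝔇(x_{k+1}) * A^τ(x₁,…,x_{k+1})
      --      for each τ with φ ∈ τ
      {ρ | ∃ τ : Set (MSO ((Sg.addConsts (k+1)).addD)),
          MSO.addPorts (k+1) φ ∈ τ ∧
          ρ = (List.range (k+1)).foldr (fun i acc => SLRForm.ex i acc)
            ((List.range (k+1)).foldr (fun i acc => SLRForm.star (.datom i) acc)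
              (SLRForm.pred (Sum.inl τ) (fun a => a.1)))}

/-- Restriction of a structure to a subset of the universe containing all constants. -/
def Interp.restrict {Sg : Signature} {U : Type} (σ : Interp Sg U) (V : Set U)
    (hc : ∀ c, σ.const c ∈ V) : Interp Sg V where
  rel := fun R => {g | (fun i => (g i : U)) ∈ σ.rel R}
  rel_finite := fun R => by
    show ((fun (g : Fin (Sg.arity R) → V) (i : Fin (Sg.arity R)) => (g i : U)) ⁻¹'
      σ.rel R).Finite
    refine Set.Finite.preimage ?_ (σ.rel_finite R)
    intro a _ b _ hab
    funext i
    exact Subtype.ext (congrFun hab i)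
  const := fun c => ⟨σ.const c, hc c⟩

/-! ### Auxiliary tree lemmas -/

namespace RTree

variable (T : RTree)

lemma root_fixed : ∀ j, T.parent^[j] T.root = T.root := by
  intro j
  induction j with
  | zero => rfl
  | succ j ih => rw [Function.iterate_succ_apply', ih, T.parent_root]

lemma eq_root_of_cycle {x : T.N} {c : ℕ} (hc : 1 ≤ c) (h : T.parent^[c] x = x) :
    x = T.root := by
  obtain ⟨r, hr⟩ := T.reach x
  have key : ∀ q, T.parent^[c * q] x = x := by
    intro q
    induction q with
    | zero => rfl
    | succ q ih => rw [Nat.mul_succ, Function.iterate_add_apply, h, ih]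
  have hge : r ≤ c * r := Nat.le_mul_of_pos_left r hc
  calc x = T.parent^[c * r] x := (key r).symm
    _ = T.parent^[c * r - r] (T.parent^[r] x) := by
        rw [← Function.iterate_add_apply, Nat.sub_add_cancel hge]
    _ = T.root := by rw [hr, root_fixed]

lemma desc_refl (n : T.N) : T.Desc n n := ⟨0, rfl⟩

lemma desc_trans {a b c : T.N} (h1 : T.Desc a b) (h2 : T.Desc b c) : T.Desc a c := by
  obtain ⟨i, hi⟩ := h1; obtain ⟨j, hj⟩ := h2
  exact ⟨j + i, by rw [Function.iterate_add_apply, hi, hj]⟩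

lemma desc_of_child {m n : T.N} (h : T.IsChild m n) : T.Desc m n := ⟨1, h.1⟩

lemma not_desc_of_child {m n : T.N} (h : T.IsChild m n) : ¬ T.Desc n m := by
  rintro ⟨j, hj⟩
  have hcyc : T.parent^[j + 1] m = m := by
    rw [Function.iterate_add_apply, Function.iterate_one, h.1, hj]
  have hm := T.eq_root_of_cycle (Nat.le_add_left 1 j) hcyc
  have hn : n = T.root := by rw [← h.1, hm, T.parent_root]
  exact h.2 (hm.trans hn.symm)

lemma desc_total {x y z : T.N} (hy : T.Desc x y) (hz : T.Desc x z) :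
    T.Desc y z ∨ T.Desc z y := by
  obtain ⟨a, ha⟩ := hy; obtain ⟨b, hb⟩ := hz
  rcases Nat.le_total a b with h | h
  · exact Or.inl ⟨b - a, by rw [← ha, ← Function.iterate_add_apply, Nat.sub_add_cancel h, hb]⟩
  · exact Or.inr ⟨a - b, by rw [← hb, ← Function.iterate_add_apply, Nat.sub_add_cancel h, ha]⟩

lemma desc_cases {n : T.N} : ∀ {j : ℕ} {x : T.N}, T.parent^[j] x = n →
    x = n ∨ ∃ m, T.IsChild m n ∧ T.Desc x m := by
  intro j
  induction j with
  | zero => intro x hx; exact Or.inl hx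
  | succ j ih =>
    intro x hx
    rw [Function.iterate_succ_apply'] at hx
    by_cases hy : T.parent^[j] x = n
    · exact ih hy
    · exact Or.inr ⟨T.parent^[j] x, ⟨hx, hy⟩, ⟨j, rfl⟩⟩

lemma desc_cases' {x n : T.N} (h : T.Desc x n) :
    x = n ∨ ∃ m, T.IsChild m n ∧ T.Desc x m := by
  obtain ⟨j, hj⟩ := h; exact T.desc_cases hj

lemma eq_of_desc_leaf {x ℓ : T.N} (hl : T.IsLeaf ℓ) (h : T.Desc x ℓ) : x = ℓ := by
  rcases T.desc_cases' h with h | ⟨m, hm, -⟩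
  · exact h
  · exact absurd hm (hl m)

lemma child_not_desc_sibling {n m₁ m₂ : T.N} (h1 : T.IsChild m₁ n) (h2 : T.IsChild m₂ n)
    (hne : m₁ ≠ m₂) : ¬ T.Desc m₁ m₂ := by
  rintro ⟨j, hj⟩
  cases j with
  | zero => exact hne hj
  | succ j =>
    rw [Function.iterate_succ_apply, h1.1] at hj
    have hcyc : T.parent^[j + 1] n = n := by
      rw [Function.iterate_succ_apply', hj, h2.1]
    have hroot := T.eq_root_of_cycle (Nat.le_add_left 1 j) hcyc
    exact h2.2 (by rw [← hj, hroot]; exact T.root_fixed j)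

end RTree
/-! ### Subtrees, bag unions, and the D-sets of a tree decomposition -/

section DecompAux

variable {Sg : Signature} {U : Type} {σI : Interp Sg U} {DD : Set U}

/-- The subtree (set of descendants) of `n`. -/
def TSub (T : TreeDecomp σI DD) (n : T.tree.N) : Set T.tree.N := {x | T.tree.Desc x n}

/-- All elements appearing in bags of the subtree of `n`. -/
def TSubB (T : TreeDecomp σI DD) (n : T.tree.N) : Set U :=
  ⋃ m ∈ TSub T n, (T.bag m : Set U)

/-- The elements of the subtree of `n` not in the bag of `n`. -/
def TDn (T : TreeDecomp σI DD) (n : T.tree.N) : Set U :=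
  TSubB T n \ (T.bag n : Set U)

variable (T : TreeDecomp σI DD)

lemma tsub_finite (n : T.tree.N) : (TSub T n).Finite := by
  haveI := T.tree.finN; exact Set.toFinite _

lemma tsubB_finite (n : T.tree.N) : (TSubB T n).Finite :=
  Set.Finite.biUnion (tsub_finite T n) fun m _ => (T.bag m).finite_toSet

lemma tDn_finite (n : T.tree.N) : (TDn T n).Finite := (tsubB_finite T n).diff

lemma mem_tsub_self (n : T.tree.N) : n ∈ TSub T n := T.tree.desc_refl n

lemma tsub_subset {m n : T.tree.N} (h : T.tree.IsChild m n) : TSub T m ⊆ TSub T n :=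
  fun _ hx => T.tree.desc_trans hx (T.tree.desc_of_child h)

lemma tsub_ncard_lt {m n : T.tree.N} (h : T.tree.IsChild m n) :
    (TSub T m).ncard < (TSub T n).ncard :=
  Set.ncard_lt_ncard
    ⟨tsub_subset T h, fun hsub => T.tree.not_desc_of_child h (hsub (mem_tsub_self T n))⟩
    (tsub_finite T n)

lemma bag_subset_tsubB {m n : T.tree.N} (h : m ∈ TSub T n) :
    (T.bag m : Set U) ⊆ TSubB T n :=
  fun _ hx => Set.mem_biUnion h hx

lemma mem_tsubB_iff {n : T.tree.N} {x : U} :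
    x ∈ TSubB T n ↔ ∃ p ∈ TSub T n, x ∈ T.bag p := by
  simp only [TSubB, Set.mem_iUnion, exists_prop, Finset.mem_coe]

lemma tsubB_subset {m n : T.tree.N} (h : T.tree.IsChild m n) : TSubB T m ⊆ TSubB T n := by
  intro x hx
  obtain ⟨p, hp, hxp⟩ := (mem_tsubB_iff T).mp hx
  exact (mem_tsubB_iff T).mpr ⟨p, tsub_subset T h hp, hxp⟩

lemma tsub_disjoint {n m₁ m₂ x : T.tree.N} (h1 : T.tree.IsChild m₁ n) (h2 : T.tree.IsChild m₂ n)
    (hne : m₁ ≠ m₂) (hx1 : x ∈ TSub T m₁) (hx2 : x ∈ TSub T m₂) : False := by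
  rcases T.tree.desc_total hx1 hx2 with h | h
  · exact T.tree.child_not_desc_sibling h1 h2 hne h
  · exact T.tree.child_not_desc_sibling h2 h1 hne.symm h

lemma tsub_eq_leaf {ℓ : T.tree.N} (hl : T.tree.IsLeaf ℓ) : TSub T ℓ = {ℓ} := by
  ext x
  simp only [TSub, Set.mem_singleton_iff, Set.mem_setOf_eq]
  exact ⟨fun h => T.tree.eq_of_desc_leaf hl h, fun h => h ▸ T.tree.desc_refl ℓ⟩

lemma leaf_exists : ∀ (N : ℕ) (n : T.tree.N), (TSub T n).ncard ≤ N →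
    ∃ ℓ, T.tree.IsLeaf ℓ ∧ ℓ ∈ TSub T n := by
  intro N
  induction N with
  | zero =>
    intro n hn
    exfalso
    have : 0 < (TSub T n).ncard :=
      (Set.ncard_pos (tsub_finite T n)).mpr ⟨n, mem_tsub_self T n⟩
    omega
  | succ N ih =>
    intro n hn
    by_cases hl : T.tree.IsLeaf n
    · exact ⟨n, hl, mem_tsub_self T n⟩
    · simp only [RTree.IsLeaf, not_forall, not_not] at hl
      obtain ⟨m, hm⟩ := hl
      obtain ⟨ℓ, h1, h2⟩ := ih m (by have := tsub_ncard_lt T hm; omega)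
      exact ⟨ℓ, h1, tsub_subset T hm h2⟩

lemma leaf_exists' (n : T.tree.N) : ∃ ℓ, T.tree.IsLeaf ℓ ∧ ℓ ∈ TSub T n :=
  leaf_exists T (TSub T n).ncard n le_rfl

lemma tsub_unary {n m : T.tree.N} (hm : T.tree.IsChild m n)
    (huniq : ∀ m', T.tree.IsChild m' n → m' = m) :
    TSub T n = insert n (TSub T m) := by
  ext x
  simp only [Set.mem_insert_iff]
  constructor
  · intro hx
    rcases T.tree.desc_cases' hx with h | ⟨m', hm', hd⟩
    · exact Or.inl h
    · exact Or.inr (by rw [← huniq m' hm']; exact hd)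
  · rintro (rfl | hx)
    · exact mem_tsub_self T x
    · exact tsub_subset T hm hx

lemma tsub_binary {n m₁ m₂ : T.tree.N} (h1 : T.tree.IsChild m₁ n) (h2 : T.tree.IsChild m₂ n)
    (hall : ∀ m', T.tree.IsChild m' n → m' = m₁ ∨ m' = m₂) :
    TSub T n = insert n (TSub T m₁ ∪ TSub T m₂) := by
  ext x
  simp only [Set.mem_insert_iff, Set.mem_union]
  constructor
  · intro hx
    rcases T.tree.desc_cases' hx with h | ⟨m', hm', hd⟩
    · exact Or.inl h
    · rcases hall m' hm' with rfl | rfl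
      · exact Or.inr (Or.inl hd)
      · exact Or.inr (Or.inr hd)
  · rintro (rfl | hx | hx)
    · exact mem_tsub_self T x
    · exact tsub_subset T h1 hx
    · exact tsub_subset T h2 hx

lemma tsubB_unary {n m : T.tree.N} (hm : T.tree.IsChild m n)
    (huniq : ∀ m', T.tree.IsChild m' n → m' = m) :
    TSubB T n = (T.bag n : Set U) ∪ TSubB T m := by
  rw [TSubB, tsub_unary T hm huniq, Set.biUnion_insert]; rfl

lemma tsubB_binary {n m₁ m₂ : T.tree.N} (h1 : T.tree.IsChild m₁ n) (h2 : T.tree.IsChild m₂ n)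
    (hall : ∀ m', T.tree.IsChild m' n → m' = m₁ ∨ m' = m₂) :
    TSubB T n = (T.bag n : Set U) ∪ (TSubB T m₁ ∪ TSubB T m₂) := by
  rw [TSubB, tsub_binary T h1 h2 hall, Set.biUnion_insert, Set.biUnion_union]; rfl

lemma crossing {u : U} {p q m : T.tree.N} (hp : u ∈ T.bag p) (hpm : T.tree.Desc p m)
    (hq : u ∈ T.bag q) (hqm : ¬ T.tree.Desc q m) : u ∈ T.bag m := by
  obtain ⟨t, ht, hpath⟩ := T.conn u ⟨p, hp⟩
  obtain ⟨jp, hjp, hallp⟩ := hpath p hp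
  obtain ⟨jq, hjq, -⟩ := hpath q hq
  have htm : ¬ T.tree.Desc t m := by
    rintro ⟨c, hc⟩
    exact hqm ⟨c + jq, by rw [Function.iterate_add_apply, hjq, hc]⟩
  obtain ⟨jm, hjm⟩ := hpm
  have hle : jm ≤ jp := by
    by_contra hlt
    push_neg at hlt
    exact htm ⟨jm - jp, by
      rw [← hjp, ← Function.iterate_add_apply, Nat.sub_add_cancel (le_of_lt hlt), hjm]⟩
  have := hallp jm hle
  rwa [hjm] at this

lemma tDn_leaf {ℓ : T.tree.N} (hl : T.tree.IsLeaf ℓ) : TDn T ℓ = ∅ := by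
  rw [TDn, TSubB, tsub_eq_leaf T hl]
  simp

lemma tDn_unary_same {n m : T.tree.N} (hm : T.tree.IsChild m n)
    (huniq : ∀ m', T.tree.IsChild m' n → m' = m) (hbag : T.bag n = T.bag m) :
    TDn T n = TDn T m := by
  have h1 : TSubB T n = TSubB T m := by
    rw [tsubB_unary T hm huniq]
    apply Set.union_eq_self_of_subset_left
    rw [hbag]
    exact bag_subset_tsubB T (mem_tsub_self T m)
  rw [TDn, TDn, h1, hbag]

lemma fresh_not_in_tsubB {n m : T.tree.N} {a : U} (hm : T.tree.IsChild m n)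
    (ha_n : a ∈ T.bag n) (ha_m : a ∉ T.bag m) : a ∉ TSubB T m := by
  intro hx
  obtain ⟨p, hp, hxp⟩ := (mem_tsubB_iff T).mp hx
  exact ha_m (crossing T hxp hp ha_n (T.tree.not_desc_of_child hm))

lemma tDn_unary_change {n m : T.tree.N} {a u' : U} (hm : T.tree.IsChild m n)
    (huniq : ∀ m', T.tree.IsChild m' n → m' = m)
    (hA : (T.bag n : Set U) \ (T.bag m : Set U) = {a})
    (hU : (T.bag m : Set U) \ (T.bag n : Set U) = {u'}) :
    TDn T n = insert u' (TDn T m) := by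
  have haa : a ∈ (T.bag n : Set U) \ (T.bag m : Set U) := by rw [hA]; exact rfl
  have hu' : u' ∈ (T.bag m : Set U) \ (T.bag n : Set U) := by rw [hU]; exact rfl
  have hfresh := fresh_not_in_tsubB T hm haa.1 haa.2
  rw [TDn, TDn, tsubB_unary T hm huniq]
  ext x
  simp only [Set.mem_diff, Set.mem_union, Set.mem_insert_iff]
  constructor
  · rintro ⟨hx1 | hx1, hx2⟩
    · exact absurd hx1 hx2
    · by_cases hxm : x ∈ (T.bag m : Set U)
      · left
        have hxx : x ∈ (T.bag m : Set U) \ (T.bag n : Set U) := ⟨hxm, hx2⟩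
        rw [hU] at hxx
        exact hxx
      · exact Or.inr ⟨hx1, hxm⟩
  · rintro (rfl | ⟨hx1, hx2⟩)
    · exact ⟨Or.inr (bag_subset_tsubB T (mem_tsub_self T m) hu'.1), hu'.2⟩
    · refine ⟨Or.inr hx1, fun hxn => ?_⟩
      have hxx : x ∈ (T.bag n : Set U) \ (T.bag m : Set U) := ⟨hxn, hx2⟩
      rw [hA] at hxx
      exact hfresh (hxx ▸ hx1)

lemma bag_change_eq {n m : T.tree.N} {a u' : U}
    (hA : (T.bag n : Set U) \ (T.bag m : Set U) = {a})
    (hU : (T.bag m : Set U) \ (T.bag n : Set U) = {u'}) :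
    (T.bag m : Set U) = ((T.bag n : Set U) \ {a}) ∪ {u'} := by
  have haa : a ∈ (T.bag n : Set U) \ (T.bag m : Set U) := by rw [hA]; exact rfl
  have hu' : u' ∈ (T.bag m : Set U) \ (T.bag n : Set U) := by rw [hU]; exact rfl
  ext x
  simp only [Set.mem_union, Set.mem_diff, Set.mem_singleton_iff]
  constructor
  · intro hx
    by_cases hxn : x ∈ (T.bag n : Set U)
    · exact Or.inl ⟨hxn, fun h => haa.2 (h ▸ hx)⟩
    · right
      have hxx : x ∈ (T.bag m : Set U) \ (T.bag n : Set U) := ⟨hx, hxn⟩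
      rw [hU] at hxx
      exact hxx
  · rintro (⟨hx1, hx2⟩ | rfl)
    · by_contra hxm
      have hxx : x ∈ (T.bag n : Set U) \ (T.bag m : Set U) := ⟨hx1, hxm⟩
      rw [hA] at hxx
      exact hx2 hxx
    · exact hu'.1

lemma tDn_binary {n m₁ m₂ : T.tree.N} (h1 : T.tree.IsChild m₁ n) (h2 : T.tree.IsChild m₂ n)
    (hall : ∀ m', T.tree.IsChild m' n → m' = m₁ ∨ m' = m₂)
    (hb1 : T.bag n = T.bag m₁) (hb2 : T.bag n = T.bag m₂) :
    TDn T n = TDn T m₁ ∪ TDn T m₂ := by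
  rw [TDn, TDn, TDn, tsubB_binary T h1 h2 hall]
  ext x
  simp only [Set.mem_diff, Set.mem_union]
  constructor
  · rintro ⟨hx1 | hx1 | hx1, hx2⟩
    · exact absurd hx1 hx2
    · exact Or.inl ⟨hx1, by rw [← hb1]; exact hx2⟩
    · exact Or.inr ⟨hx1, by rw [← hb2]; exact hx2⟩
  · rintro (⟨hx1, hx2⟩ | ⟨hx1, hx2⟩)
    · exact ⟨Or.inr (Or.inl hx1), by rw [hb1]; exact hx2⟩
    · exact ⟨Or.inr (Or.inr hx1), by rw [hb2]; exact hx2⟩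

lemma tDn_cross {n m₁ m₂ : T.tree.N} {x : U} (h1 : T.tree.IsChild m₁ n)
    (h2 : T.tree.IsChild m₂ n) (hne : m₁ ≠ m₂)
    (hx : x ∈ TDn T m₂) (hq : x ∈ TSubB T m₁) : False := by
  obtain ⟨p, hp, hxp⟩ := (mem_tsubB_iff T).mp hx.1
  obtain ⟨q, hqs, hxq⟩ := (mem_tsubB_iff T).mp hq
  have hqd : ¬ T.tree.Desc q m₂ := fun hd => tsub_disjoint T h1 h2 hne hqs hd
  exact hx.2 (crossing T hxp hp hxq hqd)

end DecompAux
/-! ### Derivation combinators for the SID `Δ_tw^k` -/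

section SLRAux

variable {Sg : Signature} {U : Type} (k : ℕ)

/-- Extend a valuation of the parameters `x₁,…,x_{k+1}` to a store. -/
noncomputable def vext (v : Fin (k+1) → U) : ℕ → U := fun m => v ⟨min m k, by omega⟩

lemma vext_fin (v : Fin (k+1) → U) (j : Fin (k+1)) : vext k v j.1 = v j := by
  unfold vext
  congr 1
  exact Fin.ext (Nat.min_eq_left (Nat.lt_succ_iff.mp j.isLt))

/-- `(U,σ') ⊨ Δ_tw^k A(v)`. -/
def SatA (σ' : InterpD Sg U) (v : Fin (k+1) → U) : Prop :=
  SLRSat (twSID Sg k) σ' (vext k v) (.pred true (fun i => i.1))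

lemma mem_rules_star :
    SLRForm.star (.pred true fun i => i.1) (.pred true fun i => i.1)
      ∈ (twSID Sg k).rules true := by
  exact Set.mem_union_left _ (Set.mem_union_left _ rfl)

lemma mem_rules_ex (i : Fin (k+1)) :
    SLRForm.ex (k+1) (.star (.datom (k+1))
        (.pred true (fun j : Fin (k+1) => if j = i then (k+1 : ℕ) else j.1)))
      ∈ (twSID Sg k).rules true := by
  exact Set.mem_union_left _ (Set.mem_union_right _ (Set.mem_iUnion.mpr ⟨i, rfl⟩))

lemma mem_rules_rel (R : Sg.Rel) (f : Fin (Sg.arity R) → Fin (k+1)) :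
    SLRForm.rel R (fun a => (f a).1) ∈ (twSID Sg k).rules true := by
  exact Set.mem_union_right _ ⟨R, f, rfl⟩

lemma satA_store {σ' : InterpD Sg U} {ν₂ : ℕ → U} {v : Fin (k+1) → U}
    (h : ∀ i : Fin (k+1), v i = ν₂ i.1) (hs : SatA k σ' v) :
    SLRSat (twSID Sg k) σ' ν₂ (.pred true (fun i => i.1)) := by
  cases hs with
  | pred ν' hρ hν hsat =>
    refine SLRSat.pred ν' hρ (fun i => ?_) hsat
    exact (hν i).trans ((vext_fin k v i).trans (h i))

lemma satA_base {σ' : InterpD Sg U} {v : Fin (k+1) → U} (R : Sg.Rel)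
    (f : Fin (Sg.arity R) → Fin (k+1))
    (h1 : σ'.rel R = {fun a => v (f a)})
    (h2 : ∀ R', R' ≠ R → σ'.rel R' = ∅) (h3 : σ'.D = ∅) :
    SatA k σ' v := by
  refine SLRSat.pred (ρ := SLRForm.rel R (fun a => (f a).1)) (vext k v)
    (mem_rules_rel k R f) (fun _ => rfl) ?_
  refine SLRSat.rel ?_ h2 h3
  rw [h1]
  congr 1
  funext a
  exact (vext_fin k v (f a)).symm

lemma satA_star {σ' σ₁ σ₂ : InterpD Sg U} {v : Fin (k+1) → U}
    (h : IsUnionD σ' σ₁ σ₂) (hs1 : SatA k σ₁ v) (hs2 : SatA k σ₂ v) : SatA k σ' v :=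
  SLRSat.pred (vext k v) (mem_rules_star k) (fun _ => rfl) (SLRSat.star h hs1 hs2)

lemma satA_subst {σ' σ₁ σ₂ : InterpD Sg U} {v : Fin (k+1) → U} (i : Fin (k+1)) (u : U)
    (h : IsUnionD σ' σ₁ σ₂) (hr : ∀ R, σ₁.rel R = ∅) (hDu : σ₁.D = {u})
    (hs : SatA k σ₂ (Function.update v i u)) : SatA k σ' v := by
  refine SLRSat.pred
    (ρ := SLRForm.ex (k+1) (.star (.datom (k+1))
      (.pred true (fun j : Fin (k+1) => if j = i then (k+1 : ℕ) else j.1))))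
    (vext k v) (mem_rules_ex k i) (fun _ => rfl) ?_
  refine SLRSat.ex u ?_
  refine SLRSat.star h ?_ ?_
  · refine SLRSat.datom ?_ hr
    rw [hDu, Function.update_self]
  · cases hs with
    | pred ν'' hρ hν hsat =>
      refine SLRSat.pred ν'' hρ (fun (j : Fin (k+1)) => ?_) hsat
      have hj := (hν j).trans (vext_fin k (Function.update v i u) j)
      by_cases hji : j = i
      · subst hji
        rw [hj, Function.update_self, if_pos rfl, Function.update_self]
      · have hlt : (j : ℕ) < k + 1 := j.isLt
        have hne2 : (j : ℕ) ≠ k + 1 := by omega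
        rw [hj, Function.update_of_ne hji, if_neg hji, Function.update_of_ne hne2, vext_fin]

end SLRAux

/-! ### Substructures of `σ` -/

section SubI

variable {Sg : Signature} {U : Type} (k : ℕ)

/-- The substructure of `σ` with tuples `s` and data set `D'`. -/
def subI (σ : InterpD Sg U) (s : ∀ R, Set (Fin (Sg.arity R) → U))
    (hfin : ∀ R, (s R).Finite) (D' : Set U) (hD' : D'.Finite) : InterpD Sg U :=
  ⟨⟨s, hfin, σ.const⟩, D', hD'⟩

lemma satA_congrD {σ : InterpD Sg U} {s : ∀ R, Set (Fin (Sg.arity R) → U)}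
    {hfin : ∀ R, (s R).Finite} {D₁ D₂ : Set U} {h₁ : D₁.Finite} {h₂ : D₂.Finite}
    {v : Fin (k+1) → U} (h : D₁ = D₂) :
    SatA k (subI σ s hfin D₁ h₁) v → SatA k (subI σ s hfin D₂ h₂) v := by
  subst h; exact id

lemma satA_consume (σ : InterpD Sg U) (s : ∀ R, Set (Fin (Sg.arity R) → U))
    (hfin : ∀ R, (s R).Finite) (F : Set U) (hF : F.Finite) :
    ∀ (D₀ : Set U) (hD₀ : D₀.Finite) (v : Fin (k+1) → U) (i : Fin (k+1)) (u : U)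
      (hDF : (D₀ ∪ insert u F).Finite),
      u ∉ D₀ → u ∉ F → (∀ x ∈ F, x ∉ D₀) →
      SatA k (subI σ s hfin D₀ hD₀) (Function.update v i u) →
      SatA k (subI σ s hfin (D₀ ∪ insert u F) hDF) v := by
  refine Set.Finite.induction_on F hF ?_ ?_
  · intro D₀ hD₀ v i u hDF hu _ _ hsat
    have heq : insert u D₀ = D₀ ∪ insert u (∅ : Set U) := by
      simp [Set.union_comm]
    have hmain : SatA k (subI σ s hfin (insert u D₀) (hD₀.insert u)) v := by
      refine satA_subst k i u
        (σ₁ := subI σ (fun _ => ∅) (fun _ => Set.finite_empty) {u} (Set.finite_singleton u))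
        (σ₂ := subI σ s hfin D₀ hD₀)
        ⟨rfl, rfl, fun R => ⟨Set.empty_inter _, (Set.empty_union _).symm⟩,
          Set.singleton_inter_eq_empty.mpr hu, Set.insert_eq u D₀⟩
        (fun _ => rfl) rfl hsat
    exact satA_congrD k heq hmain
  · intro e F' he hF' ih
    intro D₀ hD₀ v i u hDF hu huF hFD hsat
    have heq : insert e (D₀ ∪ insert u F') = D₀ ∪ insert u (insert e F') := by
      ext x
      simp only [Set.mem_insert_iff, Set.mem_union]
      tauto
    have heu : e ≠ u := fun h => huF (h ▸ Set.mem_insert e F')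
    have heD : e ∉ D₀ ∪ insert u F' := by
      simp only [Set.mem_union, Set.mem_insert_iff]
      push_neg
      exact ⟨hFD e (Set.mem_insert e F'), heu, he⟩
    have hres := ih D₀ hD₀ (Function.update v i e) i u (hD₀.union (hF'.insert u)) hu
      (fun h => huF (Set.mem_insert_of_mem e h))
      (fun x hx => hFD x (Set.mem_insert_of_mem e hx))
      (by rwa [Function.update_idem])
    have hmain : SatA k (subI σ s hfin (insert e (D₀ ∪ insert u F'))
        ((hD₀.union (hF'.insert u)).insert e)) v := by
      refine satA_subst k i e
        (σ₁ := subI σ (fun _ => ∅) (fun _ => Set.finite_empty) {e} (Set.finite_singleton e))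
        (σ₂ := subI σ s hfin (D₀ ∪ insert u F') (hD₀.union (hF'.insert u)))
        ⟨rfl, rfl, fun R => ⟨Set.empty_inter _, (Set.empty_union _).symm⟩,
          Set.singleton_inter_eq_empty.mpr heD, Set.insert_eq e _⟩
        (fun _ => rfl) rfl hres
    exact satA_congrD k heq hmain

lemma inj_of_range_eq_bag {k : ℕ} {v : Fin (k+1) → U} {b : Finset U} (hb : b.card = k+1)
    (hv : Set.range v = ↑b) : Function.Injective v := by
  intro x y hxy
  by_contra hne
  have h1 : Set.range v = v '' (Set.univ \ {y}) := by
    ext z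
    simp only [Set.mem_range, Set.mem_image, Set.mem_diff, Set.mem_univ, true_and,
      Set.mem_singleton_iff]
    constructor
    · rintro ⟨j, rfl⟩
      by_cases hj : j = y
      · exact ⟨x, hne, by rw [hj, ← hxy]⟩
      · exact ⟨j, hj, rfl⟩
    · rintro ⟨j, -, rfl⟩
      exact ⟨j, rfl⟩
  have h2 : (Set.range v).ncard ≤ k := by
    rw [h1]
    calc (v '' (Set.univ \ {y})).ncard ≤ (Set.univ \ {y} : Set (Fin (k+1))).ncard :=
          Set.ncard_image_le (Set.toFinite _)
      _ = k := by
          rw [Set.ncard_diff_singleton_of_mem (Set.mem_univ y), Set.ncard_univ]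
          simp
  rw [hv, Set.ncard_coe_finset, hb] at h2
  omega

lemma sigma_transport {Sg : Signature} {U : Type}
    {C : ∀ R : Sg.Rel, (Fin (Sg.arity R) → U) → Prop}
    {R R' : Sg.Rel} {g : Fin (Sg.arity R) → U} {g' : Fin (Sg.arity R') → U}
    (h : (⟨R, g⟩ : (R : Sg.Rel) × (Fin (Sg.arity R) → U)) = ⟨R', g'⟩)
    (hc : C R g) : C R' g' := by
  obtain ⟨rfl, h2⟩ := Sigma.mk.inj_iff.mp h
  rw [← eq_of_heq h2]
  exact hc

end SubI
/-! ### The main induction -/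

section MainInd

variable {Sg : Signature} {U : Type}

set_option maxHeartbeats 4000000 in
lemma main_ind (k : ℕ) (σ : InterpD Sg U) (T : TreeDecompD σ) (hred : T.IsReduced k) :
    ∀ (N : ℕ) (n : T.tree.N), (TSub T n).ncard ≤ N →
    ∀ (v : Fin (k+1) → U) (s : ∀ R, Set (Fin (Sg.arity R) → U))
      (hfin : ∀ R, (s R).Finite) (E : Set U) (hE : E.Finite)
      (hDE : (TDn T n ∪ E).Finite),
      Set.range v = ↑(T.bag n) →
      (∀ R, s R ⊆ σ.rel R) →
      (∀ R g, g ∈ s R → ∃ ℓ, T.tree.IsLeaf ℓ ∧ ℓ ∈ TSub T n ∧ ∀ a, g a ∈ T.bag ℓ) →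
      (∃ R g, g ∈ s R) →
      (∀ R g, g ∈ σ.rel R → (∀ ℓ, T.tree.IsLeaf ℓ → (∀ a, g a ∈ T.bag ℓ) → ℓ ∈ TSub T n) →
        g ∈ s R) →
      (∀ x ∈ E, x ∉ TSubB T n) →
      (E.Nonempty → (TDn T n).Nonempty) →
      SatA k (subI σ s hfin (TDn T n ∪ E) hDE) v := by
  intro N
  induction N with
  | zero =>
    intro n hn
    exfalso
    have : 0 < (TSub T n).ncard :=
      (Set.ncard_pos (tsub_finite T n)).mpr ⟨n, mem_tsub_self T n⟩
    omega
  | succ N ih =>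
    intro n hn v s hfin E hE hDE hv hsub hwit hne hI7 hEdisj hEne
    haveI := T.tree.finN
    have hcard : ∀ m, (T.bag m).card = k + 1 := hred.2.2.2.2.1
    have hvinj : Function.Injective v := inj_of_range_eq_bag (hcard n) hv
    by_cases hleaf : T.tree.IsLeaf n
    · -- ===== LEAF CASE =====
      obtain ⟨t, htw, huniq⟩ := hred.2.1 n hleaf
      obtain ⟨Rt, gt⟩ := t
      have hmem : ∀ R g, g ∈ s R →
          (⟨R, g⟩ : (R : Sg.Rel) × (Fin (Sg.arity R) → U)) = ⟨Rt, gt⟩ := by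
        intro R g hg
        obtain ⟨ℓ, hll, hls, hlb⟩ := hwit R g hg
        have hl : ℓ = n := by rw [tsub_eq_leaf T hleaf] at hls; exact hls
        exact huniq ⟨R, g⟩ ⟨hsub R hg, by rw [← hl]; exact hlb⟩
      obtain ⟨R₀, g₀, hg₀⟩ := hne
      have heq0 := hmem R₀ g₀ hg₀
      have hgt : gt ∈ s Rt := by
        obtain ⟨rfl, hh⟩ := Sigma.mk.inj_iff.mp heq0
        rw [← eq_of_heq hh]; exact hg₀
      have hst : s Rt = {gt} := by
        apply Set.eq_singleton_iff_unique_mem.mpr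
        refine ⟨hgt, fun g hg => ?_⟩
        exact eq_of_heq (Sigma.mk.inj_iff.mp (hmem Rt g hg)).2
      have hsR : ∀ R', R' ≠ Rt → s R' = ∅ := by
        intro R' hR'
        ext g
        simp only [Set.mem_empty_iff_false, iff_false]
        intro hg
        exact hR' (Sigma.mk.inj_iff.mp (hmem R' g hg)).1
      have hEempty : E = ∅ := by
        by_contra hcon
        obtain ⟨x, hx⟩ := hEne (Set.nonempty_iff_ne_empty.mpr hcon)
        rw [tDn_leaf T hleaf] at hx
        exact hx
      have hface : ∀ a, ∃ j : Fin (k+1), v j = gt a := by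
        intro a
        have hh : gt a ∈ (T.bag n : Set U) := htw.2 a
        rw [← hv] at hh
        exact hh
      choose f hf using hface
      refine satA_base k Rt f ?_ hsR ?_
      · show s Rt = _
        rw [hst]
        have hfe : gt = fun a => v (f a) := funext fun a => (hf a).symm
        rw [← hfe]
      · show TDn T n ∪ E = ∅
        rw [tDn_leaf T hleaf, hEempty, Set.union_empty]
    · -- ===== INTERNAL NODE =====
      have hnl := hleaf
      simp only [RTree.IsLeaf, not_forall, not_not] at hnl
      obtain ⟨m₁, hm₁⟩ := hnl
      have hwit' : ∀ R g, g ∈ s R →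
          ∃ ℓ, T.tree.IsLeaf ℓ ∧ ℓ ≠ n ∧ ℓ ∈ TSub T n ∧ ∀ a, g a ∈ T.bag ℓ := by
        intro R g hg
        obtain ⟨ℓ, h1, h2, h3⟩ := hwit R g hg
        exact ⟨ℓ, h1, fun hln => hleaf (hln ▸ h1), h2, h3⟩
      by_cases hbin : ∃ m₂, T.tree.IsChild m₂ n ∧ m₂ ≠ m₁
      · -- ===== BINARY NODE =====
        obtain ⟨m₂, hm₂, hne₂⟩ := hbin
        have hnem₁ : m₁ ≠ m₂ := fun h => hne₂ h.symm
        have hall : ∀ m', T.tree.IsChild m' n → m' = m₁ ∨ m' = m₂ := by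
          intro m' hm'
          rcases hred.2.2.1 n m' m₁ m₂ hm' hm₁ hm₂ with h | h | h
          · exact Or.inl h
          · exact Or.inr h
          · exact absurd h hnem₁
        obtain ⟨hb1, hb2⟩ := hred.2.2.2.1 n m₁ m₂ hm₁ hm₂ hnem₁
        have hall₂ : ∀ m', T.tree.IsChild m' n → m' = m₂ ∨ m' = m₁ :=
          fun m' hm' => (hall m' hm').symm
        have hN₁ : (TSub T m₁).ncard ≤ N := by have := tsub_ncard_lt T hm₁; omega
        have hN₂ : (TSub T m₂).ncard ≤ N := by have := tsub_ncard_lt T hm₂; omega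
        have hv₁ : Set.range v = ↑(T.bag m₁) := by rw [hv, hb1]
        have hv₂ : Set.range v = ↑(T.bag m₂) := by rw [hv, hb2]
        have hcover : ∀ R g, g ∈ s R →
            (∃ ℓ, T.tree.IsLeaf ℓ ∧ ℓ ∈ TSub T m₁ ∧ ∀ a, g a ∈ T.bag ℓ) ∨
            (∃ ℓ, T.tree.IsLeaf ℓ ∧ ℓ ∈ TSub T m₂ ∧ ∀ a, g a ∈ T.bag ℓ) := by
          intro R g hg
          obtain ⟨ℓ, h1, hln, h2, h3⟩ := hwit' R g hg
          rw [tsub_binary T hm₁ hm₂ hall] at h2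
          simp only [Set.mem_insert_iff, Set.mem_union] at h2
          rcases h2 with h | h | h
          · exact absurd h hln
          · exact Or.inl ⟨ℓ, h1, h, h3⟩
          · exact Or.inr ⟨ℓ, h1, h, h3⟩
        have hI7₁ : ∀ R g, g ∈ σ.rel R →
            (∀ ℓ, T.tree.IsLeaf ℓ → (∀ a, g a ∈ T.bag ℓ) → ℓ ∈ TSub T m₁) → g ∈ s R :=
          fun R g hg hal => hI7 R g hg (fun ℓ a b => tsub_subset T hm₁ (hal ℓ a b))
        have hI7₂ : ∀ R g, g ∈ σ.rel R →
            (∀ ℓ, T.tree.IsLeaf ℓ → (∀ a, g a ∈ T.bag ℓ) → ℓ ∈ TSub T m₂) → g ∈ s R :=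
          fun R g hg hal => hI7 R g hg (fun ℓ a b => tsub_subset T hm₂ (hal ℓ a b))
        have hDunion : TDn T n = TDn T m₁ ∪ TDn T m₂ := tDn_binary T hm₁ hm₂ hall hb1 hb2
        -- the key combinatorial lemma: if no tuple of `s` is witnessed under `c₂`,
        -- then `TDn c₁` is nonempty
        have key : ∀ c₁ c₂ : T.tree.N, T.tree.IsChild c₁ n → T.tree.IsChild c₂ n → c₁ ≠ c₂ →
            T.bag n = T.bag c₁ → T.bag n = T.bag c₂ →
            (∀ m', T.tree.IsChild m' n → m' = c₁ ∨ m' = c₂) →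
            (∀ R g, g ∈ s R →
              ¬ ∃ ℓ, T.tree.IsLeaf ℓ ∧ ℓ ∈ TSub T c₂ ∧ ∀ a, g a ∈ T.bag ℓ) →
            (TDn T c₁).Nonempty := by
          intro c₁ c₂ hc₁ hc₂ hcne hcb₁ hcb₂ hallc hW₂
          by_contra hcon
          have hDn1 : TDn T c₁ = ∅ := Set.not_nonempty_iff_eq_empty.mp hcon
          have hbags : ∀ p ∈ TSub T c₁, T.bag p = T.bag c₁ := by
            intro p hp
            have hsubB : TSubB T c₁ ⊆ ↑(T.bag c₁) := by
              intro x hx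
              by_contra hxn
              exact (Set.eq_empty_iff_forall_notMem.mp hDn1 x) ⟨hx, hxn⟩
            refine Finset.eq_of_subset_of_card_le (fun x hx => ?_) (by rw [hcard, hcard])
            exact hsubB (bag_subset_tsubB T hp hx)
          obtain ⟨ℓ₁, hℓ₁leaf, hℓ₁sub⟩ := leaf_exists' T c₁
          have hbagℓ₁ : T.bag ℓ₁ = T.bag n := by rw [hbags ℓ₁ hℓ₁sub, ← hcb₁]
          obtain ⟨t₁, ht₁w, ht₁u⟩ := hred.2.1 ℓ₁ hℓ₁leaf
          obtain ⟨R₀, g₀, hg₀⟩ := hne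
          have hg₀w : ∃ ℓ, T.tree.IsLeaf ℓ ∧ ℓ ∈ TSub T c₁ ∧ ∀ a, g₀ a ∈ T.bag ℓ := by
            obtain ⟨ℓ, h1, hln, h2, h3⟩ := hwit' R₀ g₀ hg₀
            rw [tsub_binary T hc₁ hc₂ hallc] at h2
            simp only [Set.mem_insert_iff, Set.mem_union] at h2
            rcases h2 with h | h | h
            · exact absurd h hln
            · exact ⟨ℓ, h1, h, h3⟩
            · exact absurd ⟨ℓ, h1, h, h3⟩ (hW₂ R₀ g₀ hg₀)
          obtain ⟨ℓ', hℓ'leaf, hℓ'sub, hℓ'bag⟩ := hg₀w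
          have hwitℓ₁ : T.Witnesses ℓ₁ ⟨R₀, g₀⟩ := by
            refine ⟨hsub R₀ hg₀, fun a => ?_⟩
            have hx := hℓ'bag a
            rw [hbags ℓ' hℓ'sub] at hx
            rw [hbags ℓ₁ hℓ₁sub]
            exact hx
          have ht₁s := ht₁u ⟨R₀, g₀⟩ hwitℓ₁
          obtain ⟨ℓ₂, hℓ₂leaf, hℓ₂sub⟩ := leaf_exists' T c₂
          obtain ⟨t₂, ht₂w, -⟩ := hred.2.1 ℓ₂ hℓ₂leaf
          obtain ⟨R₂, g₂⟩ := t₂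
          by_cases hin : ∀ a, g₂ a ∈ T.bag n
          · have hw12 : T.Witnesses ℓ₁ ⟨R₂, g₂⟩ :=
              ⟨ht₂w.1, fun a => by rw [hbagℓ₁]; exact hin a⟩
            have heq3 : (⟨R₂, g₂⟩ : (R : Sg.Rel) × (Fin (Sg.arity R) → U)) = ⟨R₀, g₀⟩ :=
              (ht₁u ⟨R₂, g₂⟩ hw12).trans ht₁s.symm
            refine hW₂ R₀ g₀ hg₀ ⟨ℓ₂, hℓ₂leaf, hℓ₂sub, ?_⟩
            exact sigma_transport (C := fun R g => ∀ a, g a ∈ T.bag ℓ₂) heq3 ht₂w.2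
          · push_neg at hin
            obtain ⟨a₂, ha₂⟩ := hin
            have hallw : ∀ ℓ, T.tree.IsLeaf ℓ → (∀ b, g₂ b ∈ T.bag ℓ) → ℓ ∈ TSub T c₂ := by
              intro ℓ hℓ hbagℓ
              by_contra hno
              have hx := crossing T (ht₂w.2 a₂) hℓ₂sub (hbagℓ a₂) hno
              rw [← hcb₂] at hx
              exact ha₂ hx
            have hg₂s : g₂ ∈ s R₂ :=
              hI7 R₂ g₂ ht₂w.1 (fun ℓ a b => tsub_subset T hc₂ (hallw ℓ a b))
            exact hW₂ R₂ g₂ hg₂s ⟨ℓ₂, hℓ₂leaf, hℓ₂sub, ht₂w.2⟩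
        by_cases hW₂ : ∀ R g, g ∈ s R →
            ¬ ∃ ℓ, T.tree.IsLeaf ℓ ∧ ℓ ∈ TSub T m₂ ∧ ∀ a, g a ∈ T.bag ℓ
        · -- starve m₂ : all of s goes to m₁, junk E ∪ TDn m₂ goes to m₁
          have hDn1 := key m₁ m₂ hm₁ hm₂ hnem₁ hb1 hb2 hall hW₂
          have hwitm : ∀ R g, g ∈ s R →
              ∃ ℓ, T.tree.IsLeaf ℓ ∧ ℓ ∈ TSub T m₁ ∧ ∀ a, g a ∈ T.bag ℓ := by
            intro R g hg
            rcases hcover R g hg with h | h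
            · exact h
            · exact absurd h (hW₂ R g hg)
          have hEDfin : (E ∪ TDn T m₂).Finite := hE.union (tDn_finite T m₂)
          have hEdm : ∀ x ∈ E ∪ TDn T m₂, x ∉ TSubB T m₁ := by
            rintro x (hx | hx) hcon
            · exact hEdisj x hx (tsubB_subset T hm₁ hcon)
            · exact tDn_cross T hm₁ hm₂ hnem₁ hx hcon
          have hres := ih m₁ hN₁ v s hfin (E ∪ TDn T m₂) hEDfin
            ((tDn_finite T m₁).union hEDfin) hv₁ hsub hwitm hne hI7₁ hEdm (fun _ => hDn1)
          refine satA_congrD k ?_ hres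
          rw [hDunion]
          ext x
          simp only [Set.mem_union]
          tauto
        · push_neg at hW₂
          obtain ⟨R₂, g₂, hg₂s, hg₂w⟩ := hW₂
          by_cases hW₁ : ∀ R g, g ∈ s R →
              ¬ ∃ ℓ, T.tree.IsLeaf ℓ ∧ ℓ ∈ TSub T m₁ ∧ ∀ a, g a ∈ T.bag ℓ
          · -- starve m₁
            have hDn2 := key m₂ m₁ hm₂ hm₁ hnem₁.symm hb2 hb1 hall₂ hW₁
            have hwitm : ∀ R g, g ∈ s R →
                ∃ ℓ, T.tree.IsLeaf ℓ ∧ ℓ ∈ TSub T m₂ ∧ ∀ a, g a ∈ T.bag ℓ := by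
              intro R g hg
              rcases hcover R g hg with h | h
              · exact absurd h (hW₁ R g hg)
              · exact h
            have hEDfin : (E ∪ TDn T m₁).Finite := hE.union (tDn_finite T m₁)
            have hEdm : ∀ x ∈ E ∪ TDn T m₁, x ∉ TSubB T m₂ := by
              rintro x (hx | hx) hcon
              · exact hEdisj x hx (tsubB_subset T hm₂ hcon)
              · exact tDn_cross T hm₂ hm₁ hnem₁.symm hx hcon
            have hres := ih m₂ hN₂ v s hfin (E ∪ TDn T m₁) hEDfin
              ((tDn_finite T m₂).union hEDfin) hv₂ hsub hwitm hne hI7₂ hEdm (fun _ => hDn2)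
            refine satA_congrD k ?_ hres
            rw [hDunion]
            ext x
            simp only [Set.mem_union]
            tauto
          · push_neg at hW₁
            obtain ⟨R₁, g₁, hg₁s, hg₁w⟩ := hW₁
            by_cases hpair : ∃ (Ra : Sg.Rel) (ga : Fin (Sg.arity Ra) → U)
                (Rb : Sg.Rel) (gb : Fin (Sg.arity Rb) → U),
                ga ∈ s Ra ∧ gb ∈ s Rb ∧
                (∃ ℓ, T.tree.IsLeaf ℓ ∧ ℓ ∈ TSub T m₁ ∧ ∀ a, ga a ∈ T.bag ℓ) ∧
                (∃ ℓ, T.tree.IsLeaf ℓ ∧ ℓ ∈ TSub T m₂ ∧ ∀ a, gb a ∈ T.bag ℓ) ∧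
                (⟨Ra, ga⟩ : (R : Sg.Rel) × (Fin (Sg.arity R) → U)) ≠ ⟨Rb, gb⟩
            · -- ===== genuine split =====
              obtain ⟨Ra, ga, Rb, gb, hgas, hgbs, hgaw, hgbw, hgne⟩ := hpair
              set s₂ : ∀ R, Set (Fin (Sg.arity R) → U) := fun R =>
                {g ∈ s R | (∃ ℓ, T.tree.IsLeaf ℓ ∧ ℓ ∈ TSub T m₂ ∧ ∀ a, g a ∈ T.bag ℓ) ∧
                  (⟨R, g⟩ : (R : Sg.Rel) × (Fin (Sg.arity R) → U)) ≠ ⟨Ra, ga⟩} with hs₂def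
              set s₁ : ∀ R, Set (Fin (Sg.arity R) → U) := fun R =>
                {g ∈ s R | g ∉ s₂ R} with hs₁def
              have hfin₁ : ∀ R, (s₁ R).Finite := fun R => (hfin R).subset (fun g hg => hg.1)
              have hfin₂ : ∀ R, (s₂ R).Finite := fun R => (hfin R).subset (fun g hg => hg.1)
              have hsub₁ : ∀ R, s₁ R ⊆ σ.rel R := fun R g hg => hsub R hg.1
              have hsub₂ : ∀ R, s₂ R ⊆ σ.rel R := fun R g hg => hsub R hg.1
              have hga1 : ga ∈ s₁ Ra := by
                refine ⟨hgas, fun hcon => ?_⟩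
                exact hcon.2.2 rfl
              have hgb2 : gb ∈ s₂ Rb := ⟨hgbs, hgbw, hgne.symm⟩
              have hwit₁ : ∀ R g, g ∈ s₁ R →
                  ∃ ℓ, T.tree.IsLeaf ℓ ∧ ℓ ∈ TSub T m₁ ∧ ∀ a, g a ∈ T.bag ℓ := by
                intro R g hg
                rcases hcover R g hg.1 with h | h
                · exact h
                · by_cases heq : (⟨R, g⟩ : (R : Sg.Rel) × (Fin (Sg.arity R) → U)) = ⟨Ra, ga⟩
                  · exact sigma_transport
                      (C := fun R g => ∃ ℓ, T.tree.IsLeaf ℓ ∧ ℓ ∈ TSub T m₁ ∧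
                        ∀ a, g a ∈ T.bag ℓ) heq.symm hgaw
                  · exact absurd (show g ∈ s₂ R from ⟨hg.1, h, heq⟩) hg.2
              have hwit₂ : ∀ R g, g ∈ s₂ R →
                  ∃ ℓ, T.tree.IsLeaf ℓ ∧ ℓ ∈ TSub T m₂ ∧ ∀ a, g a ∈ T.bag ℓ :=
                fun R g hg => hg.2.1
              have hI7s₁ : ∀ R g, g ∈ σ.rel R →
                  (∀ ℓ, T.tree.IsLeaf ℓ → (∀ a, g a ∈ T.bag ℓ) → ℓ ∈ TSub T m₁) →
                  g ∈ s₁ R := by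
                intro R g hg hal
                refine ⟨hI7₁ R g hg hal, fun hcon => ?_⟩
                obtain ⟨-, ⟨ℓ, hl1, hl2, hl3⟩, -⟩ := hcon
                exact tsub_disjoint T hm₁ hm₂ hnem₁ (hal ℓ hl1 hl3) hl2
              have hI7s₂ : ∀ R g, g ∈ σ.rel R →
                  (∀ ℓ, T.tree.IsLeaf ℓ → (∀ a, g a ∈ T.bag ℓ) → ℓ ∈ TSub T m₂) →
                  g ∈ s₂ R := by
                intro R g hg hal
                refine ⟨hI7₂ R g hg hal, ?_, fun heq => ?_⟩
                · obtain ⟨ℓ, hl1, hl2⟩ := hred.1 R g hg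
                  exact ⟨ℓ, hl1, hal ℓ hl1 hl2.2, hl2.2⟩
                · have hgw1 : ∃ ℓ, T.tree.IsLeaf ℓ ∧ ℓ ∈ TSub T m₁ ∧ ∀ a, g a ∈ T.bag ℓ :=
                    sigma_transport
                      (C := fun R g => ∃ ℓ, T.tree.IsLeaf ℓ ∧ ℓ ∈ TSub T m₁ ∧
                        ∀ a, g a ∈ T.bag ℓ) heq.symm hgaw
                  obtain ⟨ℓ, hl1, hl2, hl3⟩ := hgw1
                  exact tsub_disjoint T hm₁ hm₂ hnem₁ hl2 (hal ℓ hl1 hl3)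
              -- route the junk
              have hEroute : ∃ E₁ E₂ : Set U, E₁.Finite ∧ E₂.Finite ∧ E₁ ∪ E₂ = E ∧
                  E₁ ∩ E₂ = ∅ ∧ E₁ ⊆ E ∧ E₂ ⊆ E ∧
                  (E₁.Nonempty → (TDn T m₁).Nonempty) ∧
                  (E₂.Nonempty → (TDn T m₂).Nonempty) := by
                by_cases hD1 : (TDn T m₁).Nonempty
                · exact ⟨E, ∅, hE, Set.finite_empty, Set.union_empty E, Set.inter_empty E,
                    le_refl _, Set.empty_subset E, fun _ => hD1,
                    fun h => absurd h (by simp)⟩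
                · refine ⟨∅, E, Set.finite_empty, hE, Set.empty_union E, Set.empty_inter E,
                    Set.empty_subset E, le_refl _, fun h => absurd h (by simp), fun h => ?_⟩
                  obtain ⟨x, hx⟩ := hEne h
                  rw [hDunion] at hx
                  rcases hx with hx | hx
                  · exact absurd ⟨x, hx⟩ hD1
                  · exact ⟨x, hx⟩
              obtain ⟨E₁, E₂, hE₁f, hE₂f, hEu, hEi, hE₁sub, hE₂sub, hEne₁, hEne₂⟩ := hEroute
              have hres₁ := ih m₁ hN₁ v s₁ hfin₁ E₁ hE₁f ((tDn_finite T m₁).union hE₁f)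
                hv₁ hsub₁ hwit₁ ⟨Ra, ga, hga1⟩ hI7s₁
                (fun x hx => hEdisj x (hE₁sub hx) ∘ (tsubB_subset T hm₁ ·)) hEne₁
              have hres₂ := ih m₂ hN₂ v s₂ hfin₂ E₂ hE₂f ((tDn_finite T m₂).union hE₂f)
                hv₂ hsub₂ hwit₂ ⟨Rb, gb, hgb2⟩ hI7s₂
                (fun x hx => hEdisj x (hE₂sub hx) ∘ (tsubB_subset T hm₂ ·)) hEne₂
              refine satA_star k ?_ hres₁ hres₂
              refine ⟨rfl, rfl, fun R => ⟨?_, ?_⟩, ?_, ?_⟩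
              · -- s₁ R ∩ s₂ R = ∅
                ext g
                simp only [Set.mem_inter_iff, Set.mem_empty_iff_false, iff_false, not_and]
                intro hg1 hg2
                exact hg1.2 hg2
              · -- s R = s₁ R ∪ s₂ R
                ext g
                simp only [Set.mem_union]
                constructor
                · intro hg
                  by_cases h2 : g ∈ s₂ R
                  · exact Or.inr h2
                  · exact Or.inl ⟨hg, h2⟩
                · rintro (hg | hg)
                  · exact hg.1
                  · exact hg.1
              · -- D disjointness
                apply Set.eq_empty_iff_forall_notMem.mpr
                rintro x ⟨hx1 | hx1, hx2 | hx2⟩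
                · exact tDn_cross T hm₁ hm₂ hnem₁ hx2 hx1.1
                · exact hEdisj x (hE₂sub hx2) (tsubB_subset T hm₁ hx1.1)
                · exact hEdisj x (hE₁sub hx1) (tsubB_subset T hm₂ hx2.1)
                · exact Set.eq_empty_iff_forall_notMem.mp hEi x ⟨hx1, hx2⟩
              · -- D union
                show TDn T n ∪ E = (TDn T m₁ ∪ E₁) ∪ (TDn T m₂ ∪ E₂)
                rw [hDunion, ← hEu]
                ext x
                simp only [Set.mem_union]
                tauto
            · -- ===== single shared tuple =====
              push_neg at hpair
              have ht12 : (⟨R₁, g₁⟩ : (R : Sg.Rel) × (Fin (Sg.arity R) → U)) = ⟨R₂, g₂⟩ :=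
                hpair R₁ g₁ R₂ g₂ hg₁s hg₂s hg₁w hg₂w
              have hsall : ∀ R g, g ∈ s R →
                  (⟨R, g⟩ : (R : Sg.Rel) × (Fin (Sg.arity R) → U)) = ⟨R₂, g₂⟩ := by
                intro R g hg
                rcases hcover R g hg with h | h
                · exact hpair R g R₂ g₂ hg hg₂s h hg₂w
                · exact ((hpair R₁ g₁ R g hg₁s hg hg₁w h).symm.trans ht12)
              by_cases hD2 : (TDn T m₂).Nonempty
              · -- route to m₂, starve m₁
                have hwitm : ∀ R g, g ∈ s R →
                    ∃ ℓ, T.tree.IsLeaf ℓ ∧ ℓ ∈ TSub T m₂ ∧ ∀ a, g a ∈ T.bag ℓ :=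
                  fun R g hg => sigma_transport
                    (C := fun R g => ∃ ℓ, T.tree.IsLeaf ℓ ∧ ℓ ∈ TSub T m₂ ∧
                      ∀ a, g a ∈ T.bag ℓ) (hsall R g hg).symm hg₂w
                have hEDfin : (E ∪ TDn T m₁).Finite := hE.union (tDn_finite T m₁)
                have hEdm : ∀ x ∈ E ∪ TDn T m₁, x ∉ TSubB T m₂ := by
                  rintro x (hx | hx) hcon
                  · exact hEdisj x hx (tsubB_subset T hm₂ hcon)
                  · exact tDn_cross T hm₂ hm₁ hnem₁.symm hx hcon
                have hres := ih m₂ hN₂ v s hfin (E ∪ TDn T m₁) hEDfin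
                  ((tDn_finite T m₂).union hEDfin) hv₂ hsub hwitm hne hI7₂ hEdm
                  (fun _ => hD2)
                refine satA_congrD k ?_ hres
                rw [hDunion]
                ext x
                simp only [Set.mem_union]
                tauto
              · -- TDn m₂ = ∅ : route to m₁, starve m₂
                have hD2e : TDn T m₂ = ∅ := Set.not_nonempty_iff_eq_empty.mp hD2
                have hwitm : ∀ R g, g ∈ s R →
                    ∃ ℓ, T.tree.IsLeaf ℓ ∧ ℓ ∈ TSub T m₁ ∧ ∀ a, g a ∈ T.bag ℓ :=
                  fun R g hg => sigma_transport
                    (C := fun R g => ∃ ℓ, T.tree.IsLeaf ℓ ∧ ℓ ∈ TSub T m₁ ∧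
                      ∀ a, g a ∈ T.bag ℓ)
                    ((hsall R g hg).trans ht12.symm).symm hg₁w
                have hEnem : E.Nonempty → (TDn T m₁).Nonempty := by
                  intro h
                  obtain ⟨x, hx⟩ := hEne h
                  rw [hDunion] at hx
                  rcases hx with hx | hx
                  · exact ⟨x, hx⟩
                  · rw [hD2e] at hx; exact absurd hx (Set.notMem_empty x)
                have hres := ih m₁ hN₁ v s hfin E hE ((tDn_finite T m₁).union hE)
                  hv₁ hsub hwitm hne hI7₁
                  (fun x hx => hEdisj x hx ∘ (tsubB_subset T hm₁ ·)) hEnem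
                refine satA_congrD k ?_ hres
                rw [hDunion, hD2e]
                simp
      · -- ===== UNARY NODE =====
        push_neg at hbin
        have huniq : ∀ m', T.tree.IsChild m' n → m' = m₁ := fun m' h => hbin m' h
        have hNm : (TSub T m₁).ncard ≤ N := by have := tsub_ncard_lt T hm₁; omega
        have hwitm : ∀ R g, g ∈ s R →
            ∃ ℓ, T.tree.IsLeaf ℓ ∧ ℓ ∈ TSub T m₁ ∧ ∀ a, g a ∈ T.bag ℓ := by
          intro R g hg
          obtain ⟨ℓ, h1, hln, h2, h3⟩ := hwit' R g hg
          rw [tsub_unary T hm₁ huniq] at h2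
          rcases h2 with h | h
          · exact absurd h hln
          · exact ⟨ℓ, h1, h, h3⟩
        have hI7m : ∀ R g, g ∈ σ.rel R →
            (∀ ℓ, T.tree.IsLeaf ℓ → (∀ a, g a ∈ T.bag ℓ) → ℓ ∈ TSub T m₁) → g ∈ s R :=
          fun R g hg hal => hI7 R g hg (fun ℓ a b => tsub_subset T hm₁ (hal ℓ a b))
        have hEdm : ∀ x ∈ E, x ∉ TSubB T m₁ :=
          fun x hx => hEdisj x hx ∘ (tsubB_subset T hm₁ ·)
        rcases hred.2.2.2.2.2 n m₁ hm₁ huniq with hbag | ⟨hA1, hU1⟩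
        · -- same bag
          have hvm : Set.range v = ↑(T.bag m₁) := by rw [hv, hbag]
          have hEnem : E.Nonempty → (TDn T m₁).Nonempty := by
            intro h
            have hx := hEne h
            rwa [tDn_unary_same T hm₁ huniq hbag] at hx
          have hres := ih m₁ hNm v s hfin E hE ((tDn_finite T m₁).union hE)
            hvm hsub hwitm hne hI7m hEdm hEnem
          exact satA_congrD k (by rw [tDn_unary_same T hm₁ huniq hbag]) hres
        · -- changed bag : consume the junk and the fresh element
          obtain ⟨a, hA⟩ := Set.ncard_eq_one.mp hA1
          obtain ⟨u', hU⟩ := Set.ncard_eq_one.mp hU1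
          have haa : a ∈ (T.bag n : Set U) \ (T.bag m₁ : Set U) := by rw [hA]; exact rfl
          have hu' : u' ∈ (T.bag m₁ : Set U) \ (T.bag n : Set U) := by rw [hU]; exact rfl
          have hslot : ∃ i : Fin (k+1), v i = a := by
            have hh : a ∈ Set.range v := by rw [hv]; exact haa.1
            exact hh
          obtain ⟨i, hi⟩ := hslot
          have hvm : Set.range (Function.update v i u') = ↑(T.bag m₁) := by
            rw [bag_change_eq T hA hU]
            ext x
            simp only [Set.mem_range, Set.mem_union, Set.mem_diff, Set.mem_singleton_iff]
            constructor
            · rintro ⟨j, rfl⟩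
              by_cases hj : j = i
              · subst hj; right; rw [Function.update_self]
              · left
                rw [Function.update_of_ne hj]
                refine ⟨by rw [← hv]; exact ⟨j, rfl⟩, fun hja => ?_⟩
                exact hj (hvinj (by rw [hja, hi]))
            · rintro (⟨hx1, hx2⟩ | hxu)
              · rw [← hv] at hx1
                obtain ⟨j, rfl⟩ := hx1
                have hj : j ≠ i := fun h => hx2 (by rw [h, hi])
                exact ⟨j, Function.update_of_ne hj _ _⟩
              · exact ⟨i, by rw [Function.update_self, hxu]⟩
          have hres := ih m₁ hNm (Function.update v i u') s hfin ∅ Set.finite_empty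
            ((tDn_finite T m₁).union Set.finite_empty) hvm hsub hwitm hne hI7m
            (fun x hx => absurd hx (Set.notMem_empty x))
            (fun h => absurd h (by simp))
          have hres' : SatA k (subI σ s hfin (TDn T m₁) (tDn_finite T m₁))
              (Function.update v i u') := satA_congrD k (Set.union_empty _) hres
          have hu'Dn : u' ∉ TDn T m₁ := fun h => h.2 hu'.1
          have hu'E : u' ∉ E := fun h =>
            hEdisj u' h (tsubB_subset T hm₁ (bag_subset_tsubB T (mem_tsub_self T m₁) hu'.1))
          have hEDn : ∀ x ∈ E, x ∉ TDn T m₁ :=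
            fun x hx hcon => hEdisj x hx (tsubB_subset T hm₁ hcon.1)
          have hcons := satA_consume k σ s hfin E hE (TDn T m₁) (tDn_finite T m₁) v i u'
            ((tDn_finite T m₁).union (hE.insert u')) hu'Dn hu'E hEDn hres'
          refine satA_congrD k ?_ hcons
          rw [tDn_unary_change T hm₁ huniq hA hU]
          ext x
          simp only [Set.mem_union, Set.mem_insert_iff]
          tauto

end MainInd
lemma subI_eq_self {Sg : Signature} {U : Type} (σ : InterpD Sg U)
    (hfin : ∀ R, (σ.toInterp.rel R).Finite) (D' : Set U) (hD' : D'.Finite)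
    (h : D' = σ.D) : subI σ σ.toInterp.rel hfin D' hD' = σ := by
  subst h
  rfl
/-- Lemma `tree-decomposition-implies-sid`: if `σ` has a reduced
tree decomposition of width `k` whose root is labelled by the store values of
`x₁,…,x_{k+1}` (the variables `0,…,k`) and `σ(𝔇)` consists of all the other
elements occurring in bags, then `(U,σ) ⊨ν_{Δ_tw^k} A(x₁,…,x_{k+1})`. -/
theorem tree_decomposition_implies_sid
    {Sg : Signature} {U : Type} [Infinite U] (k : ℕ) (hk : 1 ≤ k)
    (σ : InterpD Sg U) (T : TreeDecompD σ) (hred : T.IsReduced k) (hw : T.width = k)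
    (ν : ℕ → U)
    (hroot : (T.bag T.tree.root : Set U) = ν '' Set.Iic k)
    (hD : σ.D = (⋃ n, (T.bag n : Set U)) \ (ν '' Set.Iic k)) :
    SLRSat (twSID Sg k) σ ν (.pred true (fun i => i.1)) := by
  classical
  haveI := T.tree.finN
  set v : Fin (k+1) → U := fun i => ν i.1 with hvdef
  have hv : Set.range v = ↑(T.bag T.tree.root) := by
    rw [hroot]
    ext x
    simp only [hvdef, Set.mem_range, Set.mem_image, Set.mem_Iic]
    constructor
    · rintro ⟨j, rfl⟩
      exact ⟨j.1, Nat.lt_succ_iff.mp j.isLt, rfl⟩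
    · rintro ⟨m, hm, rfl⟩
      exact ⟨⟨m, by omega⟩, rfl⟩
  have hallsub : ∀ x : T.tree.N, x ∈ TSub T T.tree.root := fun x => T.tree.reach x
  have hwit : ∀ R g, g ∈ σ.rel R →
      ∃ ℓ, T.tree.IsLeaf ℓ ∧ ℓ ∈ TSub T T.tree.root ∧ ∀ a, g a ∈ T.bag ℓ := by
    intro R g hg
    obtain ⟨ℓ, h1, h2⟩ := hred.1 R g hg
    exact ⟨ℓ, h1, hallsub ℓ, h2.2⟩
  have hne : ∃ R g, g ∈ σ.rel R := by
    obtain ⟨ℓ, hl, -⟩ := leaf_exists' T T.tree.root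
    obtain ⟨t, htw, -⟩ := hred.2.1 ℓ hl
    exact ⟨t.1, t.2, htw.1⟩
  have hTSubB : TSubB T T.tree.root = ⋃ n, (T.bag n : Set U) := by
    ext x
    simp only [TSubB, Set.mem_iUnion, exists_prop, Finset.mem_coe]
    exact ⟨fun ⟨m, _, h⟩ => ⟨m, h⟩, fun ⟨m, h⟩ => ⟨m, hallsub m, h⟩⟩
  have hDroot : TDn T T.tree.root = σ.D := by
    refine Eq.trans ?_ hD.symm
    show TSubB T T.tree.root \ ↑(T.bag T.tree.root) = _
    rw [hTSubB, hroot]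
  have hres := main_ind k σ T hred (TSub T T.tree.root).ncard T.tree.root le_rfl v
    σ.toInterp.rel σ.toInterp.rel_finite ∅ Set.finite_empty
    ((tDn_finite T T.tree.root).union Set.finite_empty) hv (fun R => le_refl _)
    hwit hne (fun R g hg _ => hg)
    (fun x hx => absurd hx (Set.notMem_empty x)) (fun h => absurd h (by simp))
  have hres2 : SatA k (subI σ σ.toInterp.rel σ.toInterp.rel_finite σ.D σ.D_finite) v :=
    satA_congrD k (by rw [Set.union_empty, hDroot]) hres
  rw [subI_eq_self σ σ.toInterp.rel_finite σ.D σ.D_finite rfl] at hres2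
  exact satA_store k (fun i => rfl) hres2
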